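/- arXiv:0911.0696 — 6 statements merged into one kernel-verified Lean document; each statement's English description precedes it below -/
import Mathlib

section
/- Let A be an M × N real matrix with nonnegative entries, where M < N. For each subset S of {1,...,N} of cardinality M, let A_S denote the M × M submatrix of A consisting of the columns indexed by S. Define the multilinear homogeneous polynomial F_A(λ_1,...,λ_N) = Σ_{S ⊆ {1,...,N}, |S| = M} per(A_S) · Π_{j ∈ S} λ_j, where per denotes the permanent. Then the function log ∘ F_A is concave on the nonnegative orthant ℝ_{≥0}^N. -/
/-- The permanent of a square real matrix. -/
noncomputable def permanent {n : ℕ} (B : Matrix (Fin n) (Fin n) ℝ) : ℝ :=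
  ∑ σ : Equiv.Perm (Fin n), ∏ i, B i (σ i)

/-- The polynomial `F_A(λ) = Σ_{|S| = M} per(A_S) Π_{j ∈ S} λ_j`, as a real function. -/
noncomputable def FA {M N : ℕ} (A : Matrix (Fin M) (Fin N) ℝ) (lam : Fin N → ℝ) : ℝ :=
  ∑ S ∈ (Finset.powersetCard M (Finset.univ : Finset (Fin N))).attach,
    permanent (Matrix.of fun i k =>
      A i ((S.1.orderIsoOfFin ((Finset.mem_powersetCard.mp S.2).2)) k)) *
      ∏ j ∈ S.1, lam j

/-- Extended-real logarithm, with `log r = -∞` for `r ≤ 0`. -/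
noncomputable def elog (r : ℝ) : EReal := if 0 < r then ((Real.log r : ℝ) : EReal) else ⊥

/-!
Expanding the permanents, `F_A(λ) = ∑ ∏ᵢ A i (f i) * λ (f i)` over the injective maps
`f : Fin M → Fin N`: this is the multi-affine part of `∏ᵢ ∑ⱼ A i j * λ j`. For positive `A` the
product does not vanish when every `λ j` lies in the open upper half-plane, and discarding the
monomials of degree at least two in one variable at a time preserves this, because a polynomial
`p` without zeros in the upper half-plane and with `p 0 ≠ 0` has `p 0 + w * p' 0 ≠ 0` there.
Hence for `x ≥ 0` and `y > 0` the real polynomial `s ↦ F_A(x + s y)` of degree `M` has only real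
roots, which are nonpositive, so that `F_A(t x + (1 - t) y) = F_A(y) ∏ₖ (1 - t - t ρₖ)` and
`F_A(x) = F_A(y) ∏ₖ (-ρₖ)`. The weighted AM-GM inequality `(-ρ)^t ≤ t (-ρ) + (1 - t)` then gives
`F_A(x)^t F_A(y)^(1-t) ≤ F_A(t x + (1 - t) y)`, and nonnegative `A`, `x`, `y` follow by continuity.
-/

open Finset Polynomial

theorem Complex.im_neg_inv_nonpos {z : ℂ} (hz : z.im ≤ 0) : (-z⁻¹).im ≤ 0 := by
  rw [Complex.neg_im, Complex.inv_im, neg_div, neg_neg]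
  exact div_nonpos_of_nonpos_of_nonneg hz (Complex.normSq_nonneg z)

theorem Polynomial.coeff_zero_add_mul_coeff_one_ne_zero {p : ℂ[X]} (h0 : p.coeff 0 ≠ 0)
    (hp : ∀ z : ℂ, 0 < z.im → p.eval z ≠ 0) {w : ℂ} (hw : 0 < w.im) :
    p.coeff 0 + w * p.coeff 1 ≠ 0 := by
  -- `p'(0) / p(0) = ∑ -1 / r` over the roots `r`, all of which lie in the closed lower half-plane
  have hζ : (p.coeff 1 / p.coeff 0).im ≤ 0 := by
    have hlog := (IsAlgClosed.splits p).eval_derivative_div_eval_of_ne_zero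
      (x := 0) (by rwa [← coeff_zero_eq_eval_zero])
    rw [← coeff_zero_eq_eval_zero, ← coeff_zero_eq_eval_zero, coeff_derivative] at hlog
    simp only [zero_add, Nat.cast_zero, mul_one] at hlog
    rw [hlog]
    refine Multiset.sum_induction (fun z : ℂ => z.im ≤ 0) _ (fun a b ha hb => ?_) (by simp) ?_
    · rw [Complex.add_im]; linarith
    · simp only [Multiset.mem_map]
      rintro _ ⟨r, hr, rfl⟩
      rw [zero_sub, one_div, inv_neg]
      refine Complex.im_neg_inv_nonpos (not_lt.mp fun hr' => hp r hr' ?_)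
      exact (mem_roots'.mp hr).2
  intro h
  have h1 : p.coeff 1 ≠ 0 := fun h1 => h0 (by simpa [h1] using h)
  have hw' : w = -(p.coeff 1 / p.coeff 0)⁻¹ := by
    rw [inv_div]; field_simp; linear_combination h
  exact (Complex.im_neg_inv_nonpos hζ).not_gt (hw' ▸ hw)

theorem Polynomial.splits_of_aeval_ne_zero_of_im_pos {p : ℝ[X]}
    (hp : ∀ z : ℂ, 0 < z.im → aeval z p ≠ 0) : p.Splits := by
  refine Splits.of_splits_map_of_injective (i := algebraMap ℝ ℂ) Complex.ofReal_injective
    (IsAlgClosed.splits _) fun z hz => ⟨z.re, Complex.ext rfl ?_⟩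
  have hroot : aeval z p = 0 := by
    rw [aeval_def, eval₂_eq_eval_map]; exact (mem_roots'.mp hz).2
  rcases lt_trichotomy z.im 0 with hneg | hzero | hpos
  · refine absurd ?_ (hp (starRingEnd ℂ z) (by simpa using hneg))
    rw [aeval_conj, hroot, map_zero]
  · simpa using hzero.symm
  · exact absurd hroot (hp z hpos)

theorem Multiset.prod_map_neg_rpow_le {m : Multiset ℝ} (hm : ∀ ρ ∈ m, ρ ≤ 0) {t : ℝ}
    (ht0 : 0 ≤ t) (ht1 : t ≤ 1) :
    (m.map fun ρ => -ρ).prod ^ t ≤ (m.map fun ρ => 1 - t - t * ρ).prod := by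
  rw [← Real.multiset_prod_map_rpow _ _ (fun ρ hρ => neg_nonneg.mpr (hm ρ hρ))]
  refine Multiset.prod_map_le_prod_map₀ _ _
    (fun ρ hρ => Real.rpow_nonneg (neg_nonneg.mpr (hm ρ hρ)) _) fun ρ hρ => ?_
  have := Real.geom_mean_le_arith_mean2_weighted ht0 (sub_nonneg.mpr ht1)
    (neg_nonneg.mpr (hm ρ hρ)) zero_le_one (by ring)
  rw [Real.one_rpow, mul_one] at this
  linarith

theorem elog_eq_bot {r : ℝ} (hr : ¬0 < r) : elog r = ⊥ := if_neg hr

theorem elog_of_pos {r : ℝ} (hr : 0 < r) : elog r = (Real.log r : EReal) := if_pos hr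

theorem mul_elog_add_mul_elog_le {a b c t : ℝ} (ht0 : 0 < t) (ht1 : t < 1)
    (h : 0 < a → 0 < b → a ^ t * b ^ (1 - t) ≤ c) :
    (t : EReal) * elog a + ((1 - t : ℝ) : EReal) * elog b ≤ elog c := by
  by_cases ha : 0 < a
  · by_cases hb : 0 < b
    · have hat := Real.rpow_pos_of_pos ha t
      have hbt := Real.rpow_pos_of_pos hb (1 - t)
      have hlog := Real.log_le_log (mul_pos hat hbt) (h ha hb)
      rw [Real.log_mul hat.ne' hbt.ne', Real.log_rpow ha, Real.log_rpow hb] at hlog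
      rw [elog_of_pos ha, elog_of_pos hb, elog_of_pos ((mul_pos hat hbt).trans_le (h ha hb)),
        ← EReal.coe_mul, ← EReal.coe_mul, ← EReal.coe_add, EReal.coe_le_coe_iff]
      exact hlog
    · rw [elog_eq_bot hb, EReal.mul_bot_of_pos (EReal.coe_pos.mpr (sub_pos.mpr ht1)),
        EReal.add_bot]
      exact bot_le
  · rw [elog_eq_bot ha, EReal.mul_bot_of_pos (EReal.coe_pos.mpr ht0), EReal.bot_add]
    exact bot_le

section

variable {M N : ℕ}

def fiberCard (f : Fin M → Fin N) (j : Fin N) : ℕ := #{i | f i = j}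

def admissibleMaps (M : ℕ) (U V : Finset (Fin N)) : Finset (Fin M → Fin N) :=
  {f | (∀ i, f i ∈ U) ∧ ∀ j ∈ V, fiberCard f j ≤ 1}

/-- The expansion of `∏ i, ∑ u ∈ U, A i u * l u` with every monomial of degree at least two in
some variable `l j`, `j ∈ V`, discarded. -/
def admissibleSum {R : Type*} [CommSemiring R] (A : Matrix (Fin M) (Fin N) R)
    (U V : Finset (Fin N)) (l : Fin N → R) : R :=
  ∑ f ∈ admissibleMaps M U V, ∏ i, A i (f i) * l (f i)

section Combinatorics

variable {U V : Finset (Fin N)} {f : Fin M → Fin N}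

theorem mem_admissibleMaps :
    f ∈ admissibleMaps M U V ↔ (∀ i, f i ∈ U) ∧ ∀ j ∈ V, fiberCard f j ≤ 1 := by
  simp [admissibleMaps]

theorem fiberCard_eq_zero {j : Fin N} : fiberCard f j = 0 ↔ ∀ i, f i ≠ j := by
  simp [fiberCard, filter_eq_empty_iff]

theorem fiberCard_le_one_iff {j : Fin N} :
    fiberCard f j ≤ 1 ↔ ∀ a, f a = j → ∀ b, f b = j → a = b := by
  simp [fiberCard, card_le_one]

theorem forall_fiberCard_le_one_iff : (∀ j, fiberCard f j ≤ 1) ↔ Function.Injective f := by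
  simp only [fiberCard_le_one_iff]
  exact ⟨fun h a b hab => h _ a hab b rfl, fun h j a ha b hb => h (ha.trans hb.symm)⟩

theorem injective_of_mem_admissibleMaps_self (hf : f ∈ admissibleMaps M U U) :
    Function.Injective f := by
  rw [mem_admissibleMaps] at hf
  exact fun a b hab => fiberCard_le_one_iff.mp (hf.2 _ (hf.1 b)) a hab b rfl

theorem mem_admissibleMaps_univ : f ∈ admissibleMaps M univ univ ↔ Function.Injective f := by
  simp [mem_admissibleMaps, forall_fiberCard_le_one_iff]

theorem admissibleMaps_nonempty (h : M ≤ #U) : (admissibleMaps M U V).Nonempty := by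
  let e := U.orderEmbOfFin rfl
  refine ⟨fun i => e (Fin.castLE h i), mem_admissibleMaps.mpr ⟨fun i => U.orderEmbOfFin_mem rfl _,
    fun j _ => forall_fiberCard_le_one_iff.mpr ?_ j⟩⟩
  exact e.injective.comp (Fin.castLE_injective h)

theorem admissibleMaps_empty : admissibleMaps M U ∅ = Fintype.piFinset fun _ => U := by
  ext f; simp [mem_admissibleMaps]

theorem admissibleMaps_insert (j : Fin N) :
    admissibleMaps M U (insert j V) = {f ∈ admissibleMaps M U V | fiberCard f j ≤ 1} := by
  ext f; simp only [mem_filter, mem_admissibleMaps, forall_mem_insert]; tauto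

theorem admissibleMaps_erase (j : Fin N) :
    admissibleMaps M (U.erase j) V = {f ∈ admissibleMaps M U V | fiberCard f j = 0} := by
  ext f; simp only [mem_filter, mem_admissibleMaps, mem_erase, fiberCard_eq_zero]
  exact ⟨fun ⟨hU, hV⟩ => ⟨⟨fun i => (hU i).2, hV⟩, fun i => (hU i).1⟩,
    fun ⟨⟨hU, hV⟩, hj⟩ => ⟨fun i => ⟨hj i, hU i⟩, hV⟩⟩

theorem image_eq_of_mem_admissibleMaps_self (hf : f ∈ admissibleMaps M U U) (hU : #U = M) :
    image f univ = U := by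
  refine eq_of_subset_of_card_le (fun u hu => ?_) ?_
  · obtain ⟨i, -, rfl⟩ := mem_image.mp hu
    exact (mem_admissibleMaps.mp hf).1 i
  · rw [card_image_of_injective _ (injective_of_mem_admissibleMaps_self hf), card_univ,
      Fintype.card_fin, hU]

end Combinatorics

section Algebra

variable {R S : Type*} [CommSemiring R] [CommSemiring S] (A : Matrix (Fin M) (Fin N) R)
  (U V : Finset (Fin N))

theorem map_admissibleSum (φ : R →+* S) (l : Fin N → R) :
    φ (admissibleSum A U V l) = admissibleSum (A.map φ) U V (φ ∘ l) := by
  simp [admissibleSum, map_sum, map_prod]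

theorem admissibleSum_empty (l : Fin N → R) :
    admissibleSum A U ∅ l = ∏ i, ∑ u ∈ U, A i u * l u := by
  rw [admissibleSum, admissibleMaps_empty, prod_univ_sum]

theorem admissibleSum_mul_left (c : R) (l : Fin N → R) :
    admissibleSum A U V (fun j => c * l j) = c ^ M * admissibleSum A U V l := by
  simp only [admissibleSum, mul_sum]
  refine sum_congr rfl fun f _ => ?_
  calc ∏ i, A i (f i) * (c * l (f i)) = ∏ i, c * (A i (f i) * l (f i)) :=
        prod_congr rfl fun i _ => by ring
    _ = _ := by rw [prod_mul_distrib, prod_const, card_univ, Fintype.card_fin]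

theorem admissibleSum_self_of_card_eq (hU : #U = M) (l : Fin N → R) :
    admissibleSum A U U l = admissibleSum A U U 1 * ∏ u ∈ U, l u := by
  rw [admissibleSum, admissibleSum, sum_mul]
  refine sum_congr rfl fun f hf => ?_
  rw [← image_eq_of_mem_admissibleMaps_self hf hU,
    prod_image fun a _ b _ h => injective_of_mem_admissibleMaps_self hf h, ← prod_mul_distrib]
  simp

theorem prod_update_eq_mul_pow_fiberCard (f : Fin M → Fin N) (l : Fin N → R) (j : Fin N)
    (w : R) :
    ∏ i, A i (f i) * Function.update l j w (f i) =
      (∏ i, A i (f i) * Function.update l j 1 (f i)) * w ^ fiberCard f j := by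
  rw [fiberCard, ← prod_const, prod_filter, ← prod_mul_distrib]
  refine prod_congr rfl fun i _ => ?_
  by_cases h : f i = j <;> simp [h]

theorem exists_polynomial_admissibleSum_insert (l : Fin N → R) (j : Fin N) :
    ∃ p : R[X], (∀ w, p.eval w = admissibleSum A U V (Function.update l j w)) ∧
      p.coeff 0 = admissibleSum A (U.erase j) V l ∧
      admissibleSum A U (insert j V) l = p.coeff 0 + l j * p.coeff 1 := by
  set c : (Fin M → Fin N) → R := fun f => ∏ i, A i (f i) * Function.update l j 1 (f i)
  have hterm : ∀ f w, ∏ i, A i (f i) * Function.update l j w (f i) = c f * w ^ fiberCard f j :=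
    fun f w => prod_update_eq_mul_pow_fiberCard A f l j w
  have hcoeff : ∀ n, (∑ f ∈ admissibleMaps M U V, C (c f) * X ^ fiberCard f j).coeff n =
      ∑ f ∈ admissibleMaps M U V, if fiberCard f j = n then c f else 0 := by
    intro n
    simp only [finsetSum_coeff, coeff_C_mul_X_pow, eq_comm]
  refine ⟨∑ f ∈ admissibleMaps M U V, C (c f) * X ^ fiberCard f j, fun w => ?_, ?_, ?_⟩
  · simp [eval_finsetSum, admissibleSum, hterm]
  · rw [hcoeff, ← sum_filter, ← admissibleMaps_erase, admissibleSum]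
    refine sum_congr rfl fun f hf => prod_congr rfl fun i _ => ?_
    rw [Function.update_of_ne (mem_erase.mp ((mem_admissibleMaps.mp hf).1 i)).1]
  · rw [admissibleSum, admissibleMaps_insert, sum_filter, hcoeff, hcoeff, mul_sum,
      ← sum_add_distrib]
    refine sum_congr rfl fun f _ => ?_
    rw [← Function.update_eq_self j l, hterm, Function.update_eq_self]
    generalize fiberCard f j = k
    rcases k with _ | _ | k <;> simp [mul_comm]

end Algebra

theorem admissibleSum_pos {A : Matrix (Fin M) (Fin N) ℝ} (hA : ∀ i j, 0 < A i j)
    {U V : Finset (Fin N)} {l : Fin N → ℝ} (hl : ∀ j ∈ U, 0 < l j) (hM : M ≤ #U) :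
    0 < admissibleSum A U V l := by
  refine sum_pos (fun f hf => prod_pos fun i _ => ?_) (admissibleMaps_nonempty hM)
  exact mul_pos (hA _ _) (hl _ ((mem_admissibleMaps.mp hf).1 i))

theorem card_le_of_admissibleSum_ne_zero {R : Type*} [CommSemiring R]
    {A : Matrix (Fin M) (Fin N) R} {l : Fin N → R} (h : admissibleSum A univ univ l ≠ 0) :
    M ≤ N := by
  obtain ⟨f, hf, -⟩ := exists_ne_zero_of_sum_ne_zero h
  simpa using Fintype.card_le_of_injective f (mem_admissibleMaps_univ.mp hf)

theorem permanent_submatrix_mul_prod (A : Matrix (Fin M) (Fin N) ℝ) (l : Fin N → ℝ)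
    (S : Finset (Fin N)) (hS : #S = M) :
    permanent (Matrix.of fun i k => A i (S.orderIsoOfFin hS k)) * ∏ j ∈ S, l j =
      ∑ f ∈ admissibleMaps M univ univ with image f univ = S, ∏ i, A i (f i) * l (f i) := by
  set e := S.orderIsoOfFin hS
  have hmem : ∀ f ∈ {f ∈ admissibleMaps M univ univ | image f univ = S},
      (∀ i, f i ∈ S) ∧ Function.Injective f := by
    intro f hf
    rw [mem_filter, mem_admissibleMaps_univ] at hf
    exact ⟨fun i => hf.2 ▸ mem_image_of_mem f (mem_univ i), hf.1⟩
  rw [permanent, sum_mul]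
  refine sum_bij' (fun σ _ i => (e (σ i) : Fin N))
    (fun f hf => Equiv.ofBijective (fun i => e.symm ⟨f i, (hmem f hf).1 i⟩)
      (Finite.injective_iff_bijective.mp fun a b hab =>
        (hmem f hf).2 (congrArg Subtype.val (e.symm.injective hab))))
    (fun σ _ => ?_) (fun _ _ => mem_univ _) (fun σ _ => ?_) (fun f _ => ?_) (fun σ _ => ?_)
  · rw [mem_filter, mem_admissibleMaps_univ]
    refine ⟨fun a b hab => σ.injective (e.injective (Subtype.ext hab)), ?_⟩
    ext u
    simp only [mem_image, mem_univ, true_and]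
    exact ⟨by rintro ⟨i, rfl⟩; exact (e (σ i)).2, fun hu => ⟨σ.symm (e.symm ⟨u, hu⟩), by simp⟩⟩
  · ext i; simp
  · ext i; simp
  · rw [prod_mul_distrib, ← prod_coe_sort S l, ← Equiv.prod_comp (σ.trans e.toEquiv)]
    rfl

theorem FA_eq_admissibleSum (A : Matrix (Fin M) (Fin N) ℝ) (l : Fin N → ℝ) :
    FA A l = admissibleSum A univ univ l := by
  have hmaps : ∀ f ∈ admissibleMaps M univ univ,
      image f univ ∈ powersetCard M (univ : Finset (Fin N)) := by
    intro f hf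
    rw [mem_powersetCard, card_image_of_injective _ (mem_admissibleMaps_univ.mp hf), card_univ,
      Fintype.card_fin]
    exact ⟨subset_univ _, rfl⟩
  rw [FA, admissibleSum, ← sum_fiberwise_of_maps_to hmaps, ← sum_attach (powersetCard M univ)
    fun S => ∑ f ∈ admissibleMaps M univ univ with image f univ = S, ∏ i, A i (f i) * l (f i)]
  exact sum_congr rfl fun S _ => permanent_submatrix_mul_prod A l S.1 (mem_powersetCard.mp S.2).2

theorem admissibleSum_empty_ne_zero {A : Matrix (Fin M) (Fin N) ℝ} (hA : ∀ i j, 0 < A i j)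
    {U : Finset (Fin N)} (hU : U.Nonempty) {l : Fin N → ℂ} (hl : ∀ j ∈ U, 0 < (l j).im) :
    admissibleSum (A.map (↑)) U ∅ l ≠ 0 := by
  rw [admissibleSum_empty, prod_ne_zero_iff]
  intro i _ h
  have him : 0 < (∑ u ∈ U, (A.map (↑)) i u * l u).im := by
    simp only [Complex.im_sum, Matrix.map_apply, Complex.im_ofReal_mul]
    exact sum_pos (fun u hu => mul_pos (hA i u) (hl u hu)) hU
  rw [h, Complex.zero_im] at him
  exact him.false

theorem admissibleSum_self_ne_zero_of_card_eq {A : Matrix (Fin M) (Fin N) ℝ}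
    (hA : ∀ i j, 0 < A i j) {U : Finset (Fin N)} (hU : #U = M) {l : Fin N → ℂ}
    (hl : ∀ j ∈ U, l j ≠ 0) : admissibleSum (A.map (↑)) U U l ≠ 0 := by
  rw [admissibleSum_self_of_card_eq _ _ hU]
  refine mul_ne_zero ?_ (prod_ne_zero_iff.mpr hl)
  refine (?_ : admissibleSum (A.map Complex.ofRealHom) _ _ (Complex.ofRealHom ∘ 1) ≠ 0)
  rw [← map_admissibleSum, _root_.map_ne_zero]
  exact (admissibleSum_pos hA (fun _ _ => one_pos) hU.ge).ne'

/-- Passing from `V` to `insert j V` keeps the coefficients of degree `0` and `1` in `l j` of the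
sum for `V`, a polynomial in `l j` without zeros in the upper half-plane whose constant coefficient
is the sum over `U.erase j`; both facts come from the induction hypothesis. -/
theorem admissibleSum_ne_zero {A : Matrix (Fin M) (Fin N) ℝ} (hA : ∀ i j, 0 < A i j)
    {U V : Finset (Fin N)} (hVU : V ⊆ U) (hM : V = U → M ≤ #U) {l : Fin N → ℂ}
    (hl : ∀ j ∈ U, 0 < (l j).im) : admissibleSum (A.map (↑)) U V l ≠ 0 := by
  induction V using Finset.induction_on generalizing U l with
  | empty =>
    rcases U.eq_empty_or_nonempty with rfl | hU
    · obtain rfl : M = 0 := by simpa using hM rfl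
      simp [admissibleSum_empty]
    · exact admissibleSum_empty_ne_zero hA hU hl
  | insert j V hj ih =>
    have hjU : j ∈ U := hVU (mem_insert_self j V)
    -- Here `U.erase j` is too small to carry an admissible map, but every admissible map is a
    -- bijection onto `U`.
    by_cases hsq : insert j V = U ∧ M = #U
    · obtain ⟨rfl, hMU⟩ := hsq
      exact admissibleSum_self_ne_zero_of_card_eq hA hMU.symm fun u hu h => by
        simpa [h] using hl u hu
    obtain ⟨p, hp_eval, hp_zero, hp_split⟩ := exists_polynomial_admissibleSum_insert
      (A.map (↑)) U V l j
    rw [hp_split]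
    refine Polynomial.coeff_zero_add_mul_coeff_one_ne_zero ?_ (fun w hw => ?_) (hl j hjU)
    · rw [hp_zero]
      refine ih (fun v hv => mem_erase.mpr ⟨?_, hVU (mem_insert_of_mem hv)⟩) (fun hV => ?_)
        (fun u hu => hl u (mem_of_mem_erase hu))
      · rintro rfl; exact hj hv
      · have hUV : insert j V = U := by rw [hV, insert_erase hjU]
        have hMle := hM hUV
        have hMne : M ≠ #U := fun h => hsq ⟨hUV, h⟩
        have hUpos := card_pos.mpr ⟨j, hjU⟩
        rw [card_erase_of_mem hjU]
        omega
    · rw [hp_eval]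
      refine ih ((subset_insert j V).trans hVU) (fun hV => absurd (hV ▸ hjU) hj) fun u hu => ?_
      rcases eq_or_ne u j with rfl | hne
      · simpa using hw
      · simpa [hne] using hl u hu

section Line

variable {R S : Type*} [CommSemiring R] [CommSemiring S] [Algebra R S]
  (A : Matrix (Fin M) (Fin N) R) (U V : Finset (Fin N)) (x y : Fin N → R)

noncomputable def admissibleSumLine : R[X] :=
  admissibleSum (A.map C) U V fun j => C (x j) + C (y j) * X

theorem aeval_admissibleSumLine (z : S) :
    aeval z (admissibleSumLine A U V x y) =
      admissibleSum (A.map (algebraMap R S)) U V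
        fun j => algebraMap R S (x j) + z * algebraMap R S (y j) := by
  rw [admissibleSumLine, ← RingHom.coe_coe (aeval z), map_admissibleSum]
  simp only [Matrix.map_map, Function.comp_def, map_add, map_mul, RingHom.coe_coe, aeval_C,
    aeval_X]
  simp_rw [mul_comm z]

theorem eval_admissibleSumLine (s : R) :
    (admissibleSumLine A U V x y).eval s = admissibleSum A U V fun j => x j + s * y j := by
  simpa using aeval_admissibleSumLine A U V x y s

theorem natDegree_admissibleSumLine_le : (admissibleSumLine A U V x y).natDegree ≤ M := by
  refine natDegree_sum_le_of_forall_le _ _ fun f _ => (natDegree_prod_le _ _).trans ?_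
  refine (sum_le_sum fun i _ => (?_ : _ ≤ 1)).trans (by simp)
  simp only [Matrix.map_apply]
  compute_degree

theorem coeff_admissibleSumLine :
    (admissibleSumLine A U V x y).coeff M = admissibleSum A U V y := by
  rw [admissibleSumLine, admissibleSum, admissibleSum, finsetSum_coeff]
  refine sum_congr rfl fun f _ => ?_
  have h := coeff_prod_of_natDegree_le (s := univ)
    (fun i => (A.map C) i (f i) * (C (x (f i)) + C (y (f i)) * X)) 1 fun i _ => by
      simp only [Matrix.map_apply]; compute_degree
  rw [card_univ, Fintype.card_fin, mul_one] at h
  rw [h]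
  simp

end Line

theorem exists_nonpos_roots_admissibleSum_add {A : Matrix (Fin M) (Fin N) ℝ} (hA : ∀ i j, 0 < A i j)
    (hMN : M ≤ N) {x y : Fin N → ℝ} (hx : ∀ j, 0 ≤ x j) (hy : ∀ j, 0 < y j) :
    ∃ m : Multiset ℝ, (∀ ρ ∈ m, ρ ≤ 0) ∧ ∀ a b : ℝ, 0 < a →
      admissibleSum A univ univ (fun j => a * x j + b * y j) =
        admissibleSum A univ univ y * (m.map fun ρ => b - a * ρ).prod := by
  set P := admissibleSumLine A univ univ x y
  have hMN' : M ≤ #(univ : Finset (Fin N)) := by simpa using hMN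
  have hy_pos := admissibleSum_pos (V := univ) hA (fun j _ => hy j) hMN'
  have hsplits : P.Splits := by
    refine splits_of_aeval_ne_zero_of_im_pos fun z hz => ?_
    rw [aeval_admissibleSumLine]
    refine admissibleSum_ne_zero hA subset_rfl (fun _ => hMN') fun j _ => ?_
    simpa using mul_pos hz (hy j)
  have hdeg : P.natDegree = M := (natDegree_admissibleSumLine_le _ _ _ _ _).antisymm
    (le_natDegree_of_ne_zero (by rw [coeff_admissibleSumLine]; exact hy_pos.ne'))
  have hlead : P.leadingCoeff = admissibleSum A univ univ y := by
    rw [leadingCoeff, hdeg, coeff_admissibleSumLine]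
  have hcard : Multiset.card P.roots = M := hdeg ▸ hsplits.natDegree_eq_card_roots.symm
  refine ⟨P.roots, fun ρ hρ => not_lt.mp fun hρ_pos => ?_, fun a b ha => ?_⟩
  · have hroot := (mem_roots'.mp hρ).2
    rw [IsRoot, eval_admissibleSumLine] at hroot
    refine (admissibleSum_pos hA (fun j _ => ?_) hMN').ne' hroot
    exact add_pos_of_nonneg_of_pos (hx j) (mul_pos hρ_pos (hy j))
  · calc admissibleSum A univ univ (fun j => a * x j + b * y j)
        = a ^ M * P.eval (b / a) := by
          rw [eval_admissibleSumLine, ← admissibleSum_mul_left]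
          congr 1; ext j; field_simp
      _ = _ := by
          have hpow : a ^ M = (P.roots.map fun _ => a).prod := by
            rw [Multiset.map_const', Multiset.prod_replicate, hcard]
          rw [hsplits.eval_eq_prod_roots, hlead, hpow, mul_left_comm, ← Multiset.prod_map_mul]
          congr 2; ext ρ; field_simp

theorem admissibleSum_geom_mean_le_of_pos {A : Matrix (Fin M) (Fin N) ℝ} (hA : ∀ i j, 0 < A i j)
    (hMN : M ≤ N) {x y : Fin N → ℝ} (hx : ∀ j, 0 ≤ x j) (hy : ∀ j, 0 < y j) {t : ℝ}
    (ht0 : 0 ≤ t) (ht1 : t ≤ 1) :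
    admissibleSum A univ univ x ^ t * admissibleSum A univ univ y ^ (1 - t) ≤
      admissibleSum A univ univ (fun j => t * x j + (1 - t) * y j) := by
  rcases ht0.eq_or_lt with rfl | ht0
  · simp
  obtain ⟨m, hm, hfac⟩ := exists_nonpos_roots_admissibleSum_add hA hMN hx hy
  have hx_eq := hfac 1 0 one_pos
  simp only [one_mul, zero_mul, add_zero, zero_sub] at hx_eq
  rw [hx_eq, hfac t (1 - t) ht0]
  have hc := admissibleSum_pos (U := univ) (V := univ) hA (fun j _ => hy j) (by simpa using hMN)
  have hQ : 0 ≤ (m.map fun ρ => -ρ).prod :=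
    Multiset.prod_nonneg fun a ha => by
      obtain ⟨ρ, hρ, rfl⟩ := Multiset.mem_map.mp ha
      exact neg_nonneg.mpr (hm ρ hρ)
  calc (admissibleSum A univ univ y * (m.map fun ρ => -ρ).prod) ^ t *
        admissibleSum A univ univ y ^ (1 - t)
      = admissibleSum A univ univ y * (m.map fun ρ => -ρ).prod ^ t := by
        rw [Real.mul_rpow hc.le hQ, mul_right_comm, ← Real.rpow_add hc]
        simp
    _ ≤ _ := mul_le_mul_of_nonneg_left (Multiset.prod_map_neg_rpow_le hm ht0.le ht1) hc.le

theorem continuous_admissibleSum {X : Type*} [TopologicalSpace X] (U V : Finset (Fin N))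
    {A : X → Matrix (Fin M) (Fin N) ℝ} {l : X → Fin N → ℝ}
    (hA : ∀ i j, Continuous fun p => A p i j) (hl : ∀ j, Continuous fun p => l p j) :
    Continuous fun p => admissibleSum (A p) U V (l p) := by
  unfold admissibleSum
  fun_prop

open Filter Topology in
theorem admissibleSum_geom_mean_le {A : Matrix (Fin M) (Fin N) ℝ} (hA : ∀ i j, 0 ≤ A i j)
    (hMN : M ≤ N) {x y : Fin N → ℝ} (hx : ∀ j, 0 ≤ x j) (hy : ∀ j, 0 ≤ y j) {t : ℝ}
    (ht0 : 0 ≤ t) (ht1 : t ≤ 1) :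
    admissibleSum A univ univ x ^ t * admissibleSum A univ univ y ^ (1 - t) ≤
      admissibleSum A univ univ (fun j => t * x j + (1 - t) * y j) := by
  have hlim : ∀ v, Tendsto (fun ε => admissibleSum (fun i j => A i j + ε) univ univ
      fun j => v j + ε) (𝓝[>] 0) (𝓝 (admissibleSum A univ univ v)) := fun v => by
    have hF := continuous_admissibleSum (A := fun ε : ℝ => fun i j => A i j + ε)
      (l := fun ε j => v j + ε) univ univ (fun i j => by fun_prop) (fun j => by fun_prop)
    simpa using (hF.tendsto 0).mono_left nhdsWithin_le_nhds
  refine le_of_tendsto_of_tendsto (((hlim x).rpow_const (Or.inr ht0)).mul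
    ((hlim y).rpow_const (Or.inr (sub_nonneg.mpr ht1)))) (hlim _)
    (eventually_nhdsWithin_of_forall fun ε (hε : 0 < ε) => ?_)
  have hline : (fun j => t * x j + (1 - t) * y j + ε) =
      fun j => t * (x j + ε) + (1 - t) * (y j + ε) := by
    ext j; ring
  dsimp only
  rw [hline]
  exact admissibleSum_geom_mean_le_of_pos (fun i j => add_pos_of_nonneg_of_pos (hA i j) hε) hMN
    (fun j => (add_pos_of_nonneg_of_pos (hx j) hε).le)
    (fun j => add_pos_of_nonneg_of_pos (hy j) hε) ht0 ht1

end

theorem stmt0_general {M N : ℕ} (A : Matrix (Fin M) (Fin N) ℝ)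
    (hA : ∀ i j, 0 ≤ A i j) :
    ∀ x y : Fin N → ℝ, (∀ j, 0 ≤ x j) → (∀ j, 0 ≤ y j) →
      ∀ t : ℝ, 0 ≤ t → t ≤ 1 →
        (t : EReal) * elog (FA A x) + ((1 - t : ℝ) : EReal) * elog (FA A y) ≤
          elog (FA A (fun j => t * x j + (1 - t) * y j)) := by
  intro x y hx hy t ht0 ht1
  -- the endpoints need their own argument since `0 * ⊥ = 0` in `EReal`
  rcases ht0.eq_or_lt with rfl | ht0
  · simp
  rcases ht1.eq_or_lt with rfl | ht1
  · simp
  refine mul_elog_add_mul_elog_le ht0 ht1 fun hFx _ => ?_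
  simp only [FA_eq_admissibleSum] at hFx ⊢
  exact admissibleSum_geom_mean_le hA (card_le_of_admissibleSum_ne_zero hFx.ne') hx hy ht0.le
    ht1.le

theorem stmt0 {M N : ℕ} (hMN : M < N) (A : Matrix (Fin M) (Fin N) ℝ)
    (hA : ∀ i j, 0 ≤ A i j) :
    ∀ x y : Fin N → ℝ, (∀ j, 0 ≤ x j) → (∀ j, 0 ≤ y j) →
      ∀ t : ℝ, 0 ≤ t → t ≤ 1 →
        (t : EReal) * elog (FA A x) + ((1 - t : ℝ) : EReal) * elog (FA A y) ≤
          elog (FA A (fun j => t * x j + (1 - t) * y j)) :=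
  stmt0_general A hA
end

section
/- Let p be a homogeneous polynomial of degree n in m variables with nonnegative real coefficients that is H-stable. Then the function (x_1,...,x_m) ↦ log p(x_1,...,x_m) is concave on the nonnegative orthant ℝ_{≥0}^m. -/
/-- A multivariate real polynomial is H-stable if it does not vanish at any point
all of whose coordinates have positive real part. -/
def Hstable {σ : Type*} (p : MvPolynomial σ ℝ) : Prop :=
  ∀ z : σ → ℂ, (∀ i, 0 < (z i).re) → MvPolynomial.aeval z p ≠ 0

/-!
Restrict `p` to the line through `y` and `x`: `g(s) = p(s x + (1 - s) y)`. For `x, y` in the open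
orthant every complex root `r` of `g` is real and lies outside `[0, 1]`: otherwise some `u` with
`Re u > 0` moves every coordinate of `u (r x + (1 - r) y)` into the open right half-plane, and
`p(u w) = uⁿ p(w)` contradicts H-stability. So `|g(s)| = |c| ∏ |s - ρ|`, each factor is affine in
`s ∈ [0, 1]`, and weighted AM-GM factor by factor gives `g(1)^t g(0)^(1-t) ≤ g(t)`. The closed
orthant follows by continuity.
-/

open MvPolynomial Polynomial Set

theorem elog_eq_log_ofReal (r : ℝ) : elog r = ENNReal.log (ENNReal.ofReal r) := by
  rw [ENNReal.log_ofReal, elog]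
  split_ifs <;> first | rfl | linarith

theorem elog_mul {a b : ℝ} (ha : 0 ≤ a) : elog (a * b) = elog a + elog b := by
  simp only [elog_eq_log_ofReal, ENNReal.ofReal_mul ha, ENNReal.log_mul_add]

theorem coe_mul_elog {a t : ℝ} (ha : 0 ≤ a) (ht : 0 ≤ t) : (t : EReal) * elog a = elog (a ^ t) := by
  rw [elog_eq_log_ofReal, elog_eq_log_ofReal, ← ENNReal.ofReal_rpow_of_nonneg ha ht,
    ENNReal.log_rpow]

theorem elog_mono : Monotone elog := fun a b h => by
  simp only [elog_eq_log_ofReal]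
  exact ENNReal.log_monotone (ENNReal.ofReal_le_ofReal h)

theorem coe_mul_elog_add_coe_mul_elog_le {a b c t : ℝ} (ha : 0 ≤ a) (hb : 0 ≤ b) (ht0 : 0 ≤ t)
    (ht1 : t ≤ 1) (h : a ^ t * b ^ (1 - t) ≤ c) :
    (t : EReal) * elog a + ((1 - t : ℝ) : EReal) * elog b ≤ elog c := by
  rw [coe_mul_elog ha ht0, coe_mul_elog hb (sub_nonneg.2 ht1), ← elog_mul (Real.rpow_nonneg ha t)]
  exact elog_mono h

theorem Multiset.prod_map_rpow_mul_prod_map_rpow_le {ι : Type*} (s : Multiset ι) {f g : ι → ℝ}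
    (hf : ∀ i ∈ s, 0 ≤ f i) (hg : ∀ i ∈ s, 0 ≤ g i) {t : ℝ} (ht0 : 0 ≤ t) (ht1 : t ≤ 1) :
    (s.map f).prod ^ t * (s.map g).prod ^ (1 - t) ≤
      (s.map fun i => t * f i + (1 - t) * g i).prod := by
  rw [← Real.multiset_prod_map_rpow s f hf, ← Real.multiset_prod_map_rpow s g hg,
    ← Multiset.prod_map_mul]
  refine Multiset.prod_map_le_prod_map₀ _ _
    (fun i hi => mul_nonneg (Real.rpow_nonneg (hf i hi) _) (Real.rpow_nonneg (hg i hi) _))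
    fun i hi => Real.geom_mean_le_arith_mean2_weighted ht0 (sub_nonneg.2 ht1) (hf i hi) (hg i hi)
      (by ring)

theorem abs_sub_eq_of_notMem_Icc {ρ t : ℝ} (hρ : ρ ∉ Icc 0 1) (ht : t ∈ Icc 0 1) :
    |t - ρ| = t * |1 - ρ| + (1 - t) * |0 - ρ| := by
  rw [mem_Icc, not_and_or, not_le, not_le] at hρ
  obtain ⟨ht0, ht1⟩ := ht
  rcases hρ with h | h
  · rw [abs_of_pos (by linarith), abs_of_pos (by linarith), abs_of_pos (by linarith)]
    ring
  · rw [abs_of_neg (by linarith), abs_of_neg (by linarith), abs_of_neg (by linarith)]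
    ring

theorem Polynomial.abs_eval_one_rpow_mul_le (g : ℝ[X])
    (hg : ∀ z ∈ g.aroots ℂ, z.im = 0 ∧ z.re ∉ Icc 0 1) {t : ℝ} (ht0 : 0 ≤ t) (ht1 : t ≤ 1) :
    |g.eval 1| ^ t * |g.eval 0| ^ (1 - t) ≤ |g.eval t| := by
  set c := ‖(g.map (algebraMap ℝ ℂ)).leadingCoeff‖
  have habs : ∀ s : ℝ, |g.eval s| = c * ((g.aroots ℂ).map fun z => |s - z.re|).prod := by
    intro s
    have h := (IsAlgClosed.splits (g.map (algebraMap ℝ ℂ))).eval_eq_prod_roots (s : ℂ)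
    rw [eval_map_algebraMap, ← Complex.coe_algebraMap, aeval_algebraMap_apply,
      Complex.coe_algebraMap, coe_aeval_eq_eval] at h
    rw [← Real.norm_eq_abs, ← Complex.norm_real, h, norm_mul, ← aroots_def]
    congr 1
    rw [← normHom_apply, map_multiset_prod, Multiset.map_map]
    refine congrArg _ (Multiset.map_congr rfl fun z hz => ?_)
    obtain ⟨ρ, rfl⟩ : ∃ ρ : ℝ, (ρ : ℂ) = z := ⟨z.re, Complex.ext rfl (hg z hz).1.symm⟩
    rw [Function.comp_apply, normHom_apply, ← Complex.ofReal_sub, Complex.norm_real,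
      Real.norm_eq_abs, Complex.ofReal_re]
  have hprod_nonneg : ∀ s : ℝ, 0 ≤ ((g.aroots ℂ).map fun z => |s - z.re|).prod :=
    fun s => Multiset.prod_nonneg fun a ha => by
      obtain ⟨z, -, rfl⟩ := Multiset.mem_map.1 ha
      exact abs_nonneg _
  rw [habs, habs, habs, Real.mul_rpow (norm_nonneg _) (hprod_nonneg 1),
    Real.mul_rpow (norm_nonneg _) (hprod_nonneg 0), mul_mul_mul_comm,
    ← Real.rpow_add' (norm_nonneg _) (by norm_num), add_sub_cancel, Real.rpow_one]
  gcongr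
  calc _ ≤ _ := Multiset.prod_map_rpow_mul_prod_map_rpow_le _ (fun _ _ => abs_nonneg _)
          (fun _ _ => abs_nonneg _) ht0 ht1
    _ = _ := congrArg _ <| Multiset.map_congr rfl fun z hz =>
          (abs_sub_eq_of_notMem_Icc (hg z hz).2 ⟨ht0, ht1⟩).symm

theorem MvPolynomial.IsHomogeneous.aeval_mul {σ R A : Type*} [CommSemiring R] [CommSemiring A]
    [Algebra R A] {p : MvPolynomial σ R} {n : ℕ} (hp : p.IsHomogeneous n) (u : A) (z : σ → A) :
    MvPolynomial.aeval (fun i => u * z i) p = u ^ n * MvPolynomial.aeval z p := by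
  simp only [aeval_def, eval₂_eq, Finset.mul_sum]
  refine Finset.sum_congr rfl fun d hd => ?_
  have hdeg : ∑ i ∈ d.support, d i = n := by
    rw [← Finsupp.degree_apply, Finsupp.degree_eq_weight_one]
    exact hp (mem_support_iff.1 hd)
  rw [← hdeg, mul_left_comm, ← Finset.prod_pow_eq_pow_sum, ← Finset.prod_mul_distrib]
  simp_rw [mul_pow]

theorem MvPolynomial.eval_nonneg {σ : Type*} {p : MvPolynomial σ ℝ} (hp : ∀ d, 0 ≤ p.coeff d)
    {x : σ → ℝ} (hx : ∀ i, 0 ≤ x i) : 0 ≤ eval x p := by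
  rw [eval_eq]
  exact Finset.sum_nonneg fun d _ =>
    mul_nonneg (hp d) (Finset.prod_nonneg fun i _ => pow_nonneg (hx i) _)

theorem Complex.exists_re_pos_re_mul_nonneg {z : ℂ} (hz : z.im = 0 → z.re ∈ Icc 0 1) :
    ∃ u : ℂ, 0 < u.re ∧ 0 ≤ (u * z).re ∧ 0 ≤ (u * (1 - z)).re := by
  by_cases him : z.im = 0
  · obtain ⟨h0, h1⟩ := hz him
    exact ⟨1, by simp, by simpa using h0, by simpa using h1⟩
  · set u : ℂ := ⟨1, z.re / z.im⟩
    have huz : (u * z).re = 0 := by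
      simp only [u, mul_re]
      field_simp
      ring
    refine ⟨u, zero_lt_one, huz.ge, ?_⟩
    rw [mul_sub, mul_one, sub_re, huz, sub_zero]
    exact zero_le_one

section Segment

variable {σ : Type*} (p : MvPolynomial σ ℝ) (x y : σ → ℝ)

noncomputable def segmentPoly : ℝ[X] :=
  aeval (fun i => Polynomial.X * Polynomial.C (x i) + (1 - Polynomial.X) * Polynomial.C (y i)) p

theorem aeval_segmentPoly {A : Type*} [CommRing A] [Algebra ℝ A] (s : A) :
    Polynomial.aeval s (segmentPoly p x y) =
      aeval (fun i => s * algebraMap ℝ A (x i) + (1 - s) * algebraMap ℝ A (y i)) p := by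
  rw [segmentPoly, comp_aeval_apply]
  simp only [map_add, map_mul, map_sub, map_one, Polynomial.aeval_X, Polynomial.aeval_C]

theorem eval_segmentPoly (s : ℝ) :
    (segmentPoly p x y).eval s = eval (fun i => s * x i + (1 - s) * y i) p := by
  simpa using aeval_segmentPoly p x y s

end Segment

namespace Hstable

variable {σ : Type*} {p : MvPolynomial σ ℝ} {n : ℕ}

theorem aeval_ne_zero_of_re_mul_pos (hstab : Hstable p) (hhom : p.IsHomogeneous n) (u : ℂ)
    {w : σ → ℂ} (hw : ∀ i, 0 < (u * w i).re) : aeval w p ≠ 0 := fun h =>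
  hstab _ hw (by rw [hhom.aeval_mul, h, mul_zero])

theorem segmentPoly_aroots (hstab : Hstable p) (hhom : p.IsHomogeneous n) {x y : σ → ℝ}
    (hx : ∀ i, 0 < x i) (hy : ∀ i, 0 < y i) :
    ∀ z ∈ (segmentPoly p x y).aroots ℂ, z.im = 0 ∧ z.re ∉ Icc 0 1 := by
  intro z hz
  by_contra hbad
  rw [not_and_not_right] at hbad
  obtain ⟨u, hu, hzu, hzu'⟩ := Complex.exists_re_pos_re_mul_nonneg hbad
  refine hstab.aeval_ne_zero_of_re_mul_pos hhom u (fun i => ?_)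
    ((aeval_segmentPoly p x y z).symm.trans (mem_aroots.1 hz).2)
  have hre : (u * (z * algebraMap ℝ ℂ (x i) + (1 - z) * algebraMap ℝ ℂ (y i))).re =
      (u * z).re * x i + (u * (1 - z)).re * y i := by
    simp [mul_add, ← mul_assoc]
  have hsum : (u * z).re + (u * (1 - z)).re = u.re := by
    rw [← Complex.add_re, ← mul_add, add_sub_cancel, mul_one]
  rw [hre]
  nlinarith [mul_nonneg hzu (sub_nonneg.2 (min_le_left (x i) (y i))),
    mul_nonneg hzu' (sub_nonneg.2 (min_le_right (x i) (y i))), mul_pos hu (lt_min (hx i) (hy i))]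

theorem rpow_mul_rpow_le_of_pos (hstab : Hstable p) (hhom : p.IsHomogeneous n)
    (hcoeff : ∀ d, 0 ≤ p.coeff d) {x y : σ → ℝ} (hx : ∀ i, 0 < x i) (hy : ∀ i, 0 < y i)
    {t : ℝ} (ht0 : 0 ≤ t) (ht1 : t ≤ 1) :
    eval x p ^ t * eval y p ^ (1 - t) ≤ eval (fun i => t * x i + (1 - t) * y i) p := by
  have h := (segmentPoly p x y).abs_eval_one_rpow_mul_le (hstab.segmentPoly_aroots hhom hx hy)
    ht0 ht1
  simp only [eval_segmentPoly, one_mul, sub_self, zero_mul, add_zero, zero_add, sub_zero] at h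
  rwa [abs_of_nonneg (eval_nonneg hcoeff fun i => (hx i).le),
    abs_of_nonneg (eval_nonneg hcoeff fun i => (hy i).le),
    abs_of_nonneg (eval_nonneg hcoeff fun i => by have := hx i; have := hy i; positivity)] at h

theorem rpow_mul_rpow_le (hstab : Hstable p) (hhom : p.IsHomogeneous n)
    (hcoeff : ∀ d, 0 ≤ p.coeff d) {x y : σ → ℝ} (hx : ∀ i, 0 ≤ x i) (hy : ∀ i, 0 ≤ y i)
    {t : ℝ} (ht0 : 0 ≤ t) (ht1 : t ≤ 1) :
    eval x p ^ t * eval y p ^ (1 - t) ≤ eval (fun i => t * x i + (1 - t) * y i) p := by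
  have hK : IsClosed {q : (σ → ℝ) × (σ → ℝ) |
      eval q.1 p ^ t * eval q.2 p ^ (1 - t) ≤ eval (fun i => t * q.1 i + (1 - t) * q.2 i) p} :=
    isClosed_le
      (((Real.continuous_rpow_const ht0).comp ((continuous_eval p).comp continuous_fst)).mul
        ((Real.continuous_rpow_const (sub_nonneg.2 ht1)).comp
          ((continuous_eval p).comp continuous_snd)))
      ((continuous_eval p).comp (by fun_prop))
  have hsub :=
    (hK.closure_subset_iff (s := (univ.pi fun _ => Ioi 0) ×ˢ (univ.pi fun _ => Ioi 0))).2
    fun q hq => hstab.rpow_mul_rpow_le_of_pos hhom hcoeff (fun i => hq.1 i (mem_univ i))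
      (fun i => hq.2 i (mem_univ i)) ht0 ht1
  rw [closure_prod_eq, closure_pi_set, closure_Ioi] at hsub
  exact hsub (a := (x, y)) ⟨fun i _ => mem_Ici.2 (hx i), fun i _ => mem_Ici.2 (hy i)⟩

end Hstable

theorem stmt2 {m n : ℕ} (p : MvPolynomial (Fin m) ℝ)
    (hhom : p.IsHomogeneous n) (hcoeff : ∀ c, 0 ≤ p.coeff c) (hstab : Hstable p) :
    ∀ x y : Fin m → ℝ, (∀ i, 0 ≤ x i) → (∀ i, 0 ≤ y i) →
      ∀ t : ℝ, 0 ≤ t → t ≤ 1 →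
        (t : EReal) * elog (MvPolynomial.eval x p) +
            ((1 - t : ℝ) : EReal) * elog (MvPolynomial.eval y p) ≤
          elog (MvPolynomial.eval (fun i => t * x i + (1 - t) * y i) p) := by
  intro x y hx hy t ht0 ht1
  exact coe_mul_elog_add_coe_mul_elog_le (eval_nonneg hcoeff hx) (eval_nonneg hcoeff hy) ht0 ht1
    (hstab.rpow_mul_rpow_le hhom hcoeff hx hy ht0 ht1)
end

section
/- Let p be a homogeneous polynomial of degree n in m variables with nonnegative real coefficients that is H-stable. Then for all real numbers x_1,...,x_m ≥ 0 and all real numbers y_1,...,y_m, one has |p(x_1 + i·y_1, ..., x_m + i·y_m)| ≥ p(x_1,...,x_m). -/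
/-!
For `x > 0` the univariate polynomial `L(t) = p(t x + i y)` has degree at most `n` and, by
homogeneity, `tⁿ`-coefficient `p(x)`. Every root `r` of `L` lies in the closed left half-plane,
since otherwise `r x + i y` would be a zero of `p` with coordinates of positive real part. Hence
`|p(x + i y)| = |L(1)| = |lc L| ∏ |1 - r| ≥ |lc L| ≥ p(x)`. Nonnegative `x` are limits of
positive ones, and both sides are continuous in `x`.
-/

open Polynomial

namespace Polynomial

theorem coeff_prod_sum_of_natDegree_le {R ι : Type*} [CommSemiring R] (s : Finset ι)
    (f : ι → R[X]) (d : ι → ℕ) (h : ∀ i ∈ s, (f i).natDegree ≤ d i) :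
    (∏ i ∈ s, f i).coeff (∑ i ∈ s, d i) = ∏ i ∈ s, (f i).coeff (d i) := by
  induction s using Finset.cons_induction with
  | empty => simp
  | cons a s _ ih =>
    have hs : ∀ i ∈ s, (f i).natDegree ≤ d i := fun i hi => h i (Finset.mem_cons_of_mem hi)
    rw [Finset.prod_cons, Finset.sum_cons, Finset.prod_cons,
      coeff_mul_add_eq_of_natDegree_le (h a (Finset.mem_cons_self a s))
        ((natDegree_prod_le s f).trans (Finset.sum_le_sum hs)), ih hs]

theorem norm_leadingCoeff_le_norm_eval {P : ℂ[X]} (hroots : ∀ r ∈ P.roots, r.re ≤ 0)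
    {z : ℂ} (hz : 1 ≤ z.re) : ‖P.leadingCoeff‖ ≤ ‖P.eval z‖ := by
  have hfactor :=
    C_leadingCoeff_mul_prod_multiset_X_sub_C (IsAlgClosed.card_roots_eq_natDegree (p := P))
  have hone : 1 ≤ (P.roots.map fun r => ‖z - r‖).prod :=
    Multiset.one_le_prod_map fun r hr =>
      calc (1 : ℝ) ≤ (z - r).re := by rw [Complex.sub_re]; linarith [hroots r hr]
        _ ≤ ‖z - r‖ := Complex.re_le_norm _
  calc ‖P.leadingCoeff‖ ≤ ‖P.leadingCoeff‖ * (P.roots.map fun r => ‖z - r‖).prod :=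
        le_mul_of_one_le_right (norm_nonneg _) hone
    _ = ‖P.eval z‖ := by
      have hnorm (s : Multiset ℂ) : ‖s.prod‖ = (s.map (‖·‖)).prod :=
        map_multiset_prod normHom s
      conv_rhs => rw [← hfactor]
      rw [eval_mul, eval_C, eval_multiset_prod, norm_mul, hnorm, Multiset.map_map,
        Multiset.map_map]
      simp [Function.comp_def]

end Polynomial

namespace MvPolynomial

variable {σ R S : Type*} [CommSemiring R] [CommSemiring S] [Algebra R S] {A : σ → S[X]}

theorem eval_aeval_polynomial (t : S) (φ : MvPolynomial σ R) :
    (aeval A φ).eval t = aeval (fun i => (A i).eval t) φ := by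
  simpa using comp_aeval_apply ((Polynomial.aeval t).restrictScalars R) φ (f := A)

theorem natDegree_aeval_monomial_le (hA : ∀ i, (A i).natDegree ≤ 1) (d : σ →₀ ℕ)
    (c : R) :
    (aeval A (monomial d c)).natDegree ≤ d.degree := by
  rw [aeval_monomial, Polynomial.algebraMap_apply, Finsupp.degree_apply, Finsupp.prod]
  refine (natDegree_C_mul_le _ _).trans <| (natDegree_prod_le _ _).trans <|
    Finset.sum_le_sum fun i _ => (natDegree_pow_le_of_le _ (hA i)).trans_eq (mul_one _)

theorem coeff_aeval_monomial_degree (hA : ∀ i, (A i).natDegree ≤ 1) (d : σ →₀ ℕ)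
    (c : R) :
    (aeval A (monomial d c)).coeff d.degree =
      aeval (fun i => (A i).coeff 1) (monomial d c) := by
  rw [aeval_monomial, aeval_monomial, Polynomial.algebraMap_apply, Finsupp.degree_apply,
    Finsupp.prod, Finsupp.prod, Polynomial.coeff_C_mul, coeff_prod_sum_of_natDegree_le _ _ _
      fun i _ => (natDegree_pow_le_of_le _ (hA i)).trans_eq (mul_one _)]
  congr 1
  refine Finset.prod_congr rfl fun i _ => ?_
  simpa using coeff_pow_of_natDegree_le (hA i) (m := d i)

namespace IsHomogeneous

variable {φ : MvPolynomial σ R} {n : ℕ}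

theorem natDegree_aeval_le (hφ : φ.IsHomogeneous n) (hA : ∀ i, (A i).natDegree ≤ 1) :
    (MvPolynomial.aeval A φ).natDegree ≤ n := by
  conv_lhs => rw [← support_sum_monomial_coeff φ]
  rw [map_sum]
  refine natDegree_sum_le_of_forall_le _ _ fun d hd => ?_
  rw [hφ.degree_eq_sum_deg_support hd]
  exact natDegree_aeval_monomial_le hA d _

theorem coeff_aeval (hφ : φ.IsHomogeneous n) (hA : ∀ i, (A i).natDegree ≤ 1) :
    (MvPolynomial.aeval A φ).coeff n = MvPolynomial.aeval (fun i => (A i).coeff 1) φ := by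
  conv_lhs => rw [← support_sum_monomial_coeff φ]
  conv_rhs => rw [← support_sum_monomial_coeff φ]
  rw [map_sum, map_sum, finsetSum_coeff]
  refine Finset.sum_congr rfl fun d hd => ?_
  rw [hφ.degree_eq_sum_deg_support hd]
  exact coeff_aeval_monomial_degree hA d _

end IsHomogeneous

noncomputable def lineRestriction (p : MvPolynomial σ ℝ) (x y : σ → ℝ) : ℂ[X] :=
  aeval (fun i =>
    Polynomial.C (x i : ℂ) * Polynomial.X + Polynomial.C ((y i : ℂ) * Complex.I)) p

theorem eval_lineRestriction (p : MvPolynomial σ ℝ) (x y : σ → ℝ) (t : ℂ) :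
    (p.lineRestriction x y).eval t = aeval (fun i => x i * t + y i * Complex.I) p := by
  simp [lineRestriction, eval_aeval_polynomial]

end MvPolynomial

namespace Hstable

variable {σ : Type*} {p : MvPolynomial σ ℝ}

theorem re_nonpos_of_mem_roots_lineRestriction (hp : Hstable p) {x : σ → ℝ}
    (hx : ∀ i, 0 < x i) (y : σ → ℝ) {r : ℂ} (hr : r ∈ (p.lineRestriction x y).roots) :
    r.re ≤ 0 := by
  by_contra! hre
  refine hp (fun i => x i * r + y i * Complex.I) (fun i => by simpa using mul_pos (hx i) hre) ?_
  rw [← p.eval_lineRestriction]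
  exact (mem_roots'.mp hr).2

theorem eval_le_norm_aeval_of_pos (hp : Hstable p) {n : ℕ} (hhom : p.IsHomogeneous n)
    {x : σ → ℝ} (hx : ∀ i, 0 < x i) (y : σ → ℝ) :
    MvPolynomial.eval x p ≤
      ‖MvPolynomial.aeval (fun i => (x i : ℂ) + (y i : ℂ) * Complex.I) p‖ := by
  set L := p.lineRestriction x y
  have hlin (i : σ) : (C (x i : ℂ) * X + C ((y i : ℂ) * Complex.I)).natDegree ≤ 1 := by
    compute_degree
  have hdeg : L.natDegree ≤ n := hhom.natDegree_aeval_le hlin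
  have hcoeff : L.coeff n = MvPolynomial.eval x p := by
    refine (hhom.coeff_aeval hlin).trans ?_
    simpa [Function.comp_def] using MvPolynomial.aeval_algebraMap_apply ℂ x p
  have hcoeff_le : ‖L.coeff n‖ ≤ ‖L.leadingCoeff‖ := by
    rcases hdeg.eq_or_lt with h | h
    · rw [leadingCoeff, h]
    · rw [coeff_eq_zero_of_natDegree_lt h, norm_zero]
      exact norm_nonneg _
  calc MvPolynomial.eval x p ≤ ‖L.coeff n‖ := by
        rw [hcoeff, Complex.norm_real]; exact le_abs_self _
    _ ≤ ‖L.leadingCoeff‖ := hcoeff_le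
    _ ≤ ‖L.eval 1‖ := norm_leadingCoeff_le_norm_eval
        (fun r hr => hp.re_nonpos_of_mem_roots_lineRestriction hx y hr) (by simp)
    _ = _ := by simp [L, MvPolynomial.eval_lineRestriction]

theorem eval_le_norm_aeval (hp : Hstable p) {n : ℕ} (hhom : p.IsHomogeneous n)
    (x y : σ → ℝ) (hx : ∀ i, 0 ≤ x i) :
    MvPolynomial.eval x p ≤
      ‖MvPolynomial.aeval (fun i => (x i : ℂ) + (y i : ℂ) * Complex.I) p‖ := by
  have hclosed : IsClosed {x : σ → ℝ | MvPolynomial.eval x p ≤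
      ‖MvPolynomial.aeval (fun i => (x i : ℂ) + (y i : ℂ) * Complex.I) p‖} := by
    refine isClosed_le (MvPolynomial.continuous_eval p) ?_
    simp only [MvPolynomial.aeval_def, ← MvPolynomial.eval_map]
    exact continuous_norm.comp ((MvPolynomial.continuous_eval _).comp (by fun_prop))
  have hx_mem : x ∈ closure (Set.univ.pi fun _ => Set.Ioi 0) := by
    simpa [closure_pi_set, Pi.le_def] using hx
  exact closure_minimal (fun x hx => hp.eval_le_norm_aeval_of_pos hhom (by simpa using hx) y)
    hclosed hx_mem

end Hstable

theorem stmt4_general {m n : ℕ} (p : MvPolynomial (Fin m) ℝ)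
    (hhom : p.IsHomogeneous n) (hstab : Hstable p) :
    ∀ x y : Fin m → ℝ, (∀ i, 0 ≤ x i) →
      MvPolynomial.eval x p ≤
        ‖MvPolynomial.aeval
          (fun i => (x i : ℂ) + (y i : ℂ) * Complex.I) p‖ :=
  hstab.eval_le_norm_aeval hhom

theorem stmt4 {m n : ℕ} (p : MvPolynomial (Fin m) ℝ)
    (hhom : p.IsHomogeneous n) (hcoeff : ∀ c, 0 ≤ p.coeff c) (hstab : Hstable p) :
    ∀ x y : Fin m → ℝ, (∀ i, 0 ≤ x i) →
      MvPolynomial.eval x p ≤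
        ‖MvPolynomial.aeval
          (fun i => (x i : ℂ) + (y i : ℂ) * Complex.I) p‖ :=
  stmt4_general p hhom hstab
end

section
/- Let p be a homogeneous polynomial of degree n in m variables (m ≥ 2, n ≥ 1) with nonnegative real coefficients that is H-SStable. Define p_(1)(x_2,...,x_m) = (∂p/∂x_1)(0, x_2, ..., x_m). Then p_(1) is H-SStable; in particular p_(1)(z_2,...,z_m) ≠ 0 whenever Re(z_i) ≥ 0 for 2 ≤ i ≤ m and Σ_{2 ≤ i ≤ m} Re(z_i) > 0. -/
/-- A multivariate real polynomial is H-SStable if it does not vanish at any point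
all of whose coordinates have nonnegative real part, with at least one coordinate of
positive real part. -/
def HSStable {σ : Type*} [Fintype σ] (p : MvPolynomial σ ℝ) : Prop :=
  ∀ z : σ → ℂ, (∀ i, 0 ≤ (z i).re) → 0 < ∑ i, (z i).re →
    MvPolynomial.aeval z p ≠ 0

/-- `p_(1)(x_2,...,x_m) = (∂p/∂x_1)(0, x_2, ..., x_m)`, as a polynomial in one fewer
variable: differentiate in the first variable, then substitute `0` for it. -/
noncomputable def derivFirst {m : ℕ} (p : MvPolynomial (Fin (m + 1)) ℝ) :
    MvPolynomial (Fin m) ℝ :=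
  MvPolynomial.aeval
    (fun i : Fin (m + 1) =>
      Fin.cases (0 : MvPolynomial (Fin m) ℝ) (fun j => MvPolynomial.X j) i)
    (MvPolynomial.pderiv (0 : Fin (m + 1)) p)

/-!
Fix `z` with `Re zⱼ ≥ 0` and `∑ Re zⱼ > 0`, and let `f(w) = p(w, z)`. Stability of `p` says that
`f` has no zeros in the closed right half-plane. By homogeneity the coefficient of `wⁿ` in `f` is
`p(1, 0, …, 0)`, which is nonzero by stability, so `f` is nonconstant. By Gauss–Lucas the zeros of
`f'` lie in the convex hull of those of `f`, hence in the open left half-plane, so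
`p_(1)(z) = f'(0) ≠ 0`.
-/

open Polynomial in
theorem Polynomial.eval_derivative_ne_zero_of_re_nonneg {P : ℂ[X]} (hP : 0 < P.degree)
    (hstab : ∀ w : ℂ, 0 ≤ w.re → P.eval w ≠ 0) {w : ℂ} (hw : 0 ≤ w.re) :
    P.derivative.eval w ≠ 0 := by
  intro hroot
  have hroots : P.rootSet ℂ ⊆ {c : ℂ | c.re < 0} := fun r hr => by
    rw [mem_rootSet] at hr
    by_contra h
    exact hstab r (not_lt.mp h) (by simpa using hr.2)
  have hmem : w ∈ P.derivative.rootSet ℂ := by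
    rw [mem_rootSet]
    simpa [(natDegree_pos_iff_degree_pos.mpr hP).ne'] using hroot
  exact hw.not_gt <| convexHull_min hroots (convex_halfSpace_re_lt 0)
    (rootSet_derivative_subset_convexHull_rootSet hP hmem)

namespace MvPolynomial

variable {R S : Type*} [CommSemiring R] [CommSemiring S] [Algebra R S] {m : ℕ}

noncomputable def specializeTail (z : Fin m → S) (p : MvPolynomial (Fin (m + 1)) R) :
    Polynomial S :=
  (finSuccEquiv R m p).map (aeval z).toRingHom

theorem eval_specializeTail (p : MvPolynomial (Fin (m + 1)) R) (w : S) (z : Fin m → S) :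
    (specializeTail z p).eval w = aeval (Fin.cons w z) p := by
  induction p using MvPolynomial.induction_on with
  | C a => simp [specializeTail, finSuccEquiv_apply]
  | add p q hp hq => simp_all [specializeTail]
  | mul_X p i hp =>
    induction i using Fin.cases <;>
      simp_all [specializeTail, finSuccEquiv_X_zero, finSuccEquiv_X_succ]

theorem derivative_finSuccEquiv (p : MvPolynomial (Fin (m + 1)) R) :
    (finSuccEquiv R m p).derivative = finSuccEquiv R m (pderiv 0 p) := by
  induction p using MvPolynomial.induction_on with
  | C a => simp [finSuccEquiv_apply]
  | add p q hp hq => simp [hp, hq]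
  | mul_X p i hp =>
    induction i using Fin.cases <;>
      simp [hp, finSuccEquiv_X_zero, finSuccEquiv_X_succ, Fin.succ_ne_zero, mul_comm]

theorem derivative_specializeTail (p : MvPolynomial (Fin (m + 1)) R) (z : Fin m → S) :
    (specializeTail z p).derivative = specializeTail z (pderiv 0 p) := by
  rw [specializeTail, Polynomial.derivative_map, derivative_finSuccEquiv, specializeTail]

theorem coeff_zero_coeff_finSuccEquiv (p : MvPolynomial (Fin (m + 1)) R) (k : ℕ) :
    ((finSuccEquiv R m p).coeff k).coeff 0 = p.coeff (Finsupp.single 0 k) := by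
  rw [finSuccEquiv_coeff_coeff, Finsupp.cons_zero_eq_single_zero]

theorem IsHomogeneous.coeff_specializeTail {n : ℕ} {p : MvPolynomial (Fin (m + 1)) R}
    (hp : p.IsHomogeneous n) (z : Fin m → S) :
    (specializeTail z p).coeff n = algebraMap R S (p.coeff (Finsupp.single 0 n)) := by
  have hconst := (hp.finSuccEquiv_coeff_isHomogeneous n 0 (add_zero n)).totalDegree_le
  rw [specializeTail, Polynomial.coeff_map,
    totalDegree_eq_zero_iff_eq_C.mp (Nat.le_zero.mp hconst)]
  simp [coeff_zero_coeff_finSuccEquiv]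

theorem specializeTail_zero_of_isHomogeneous {n : ℕ} {p : MvPolynomial (Fin (m + 1)) R}
    (hp : p.IsHomogeneous n) :
    specializeTail (0 : Fin m → S) p =
      Polynomial.C (algebraMap R S (p.coeff (Finsupp.single 0 n))) * Polynomial.X ^ n := by
  ext k
  rw [Polynomial.coeff_C_mul_X_pow]
  split_ifs with hk
  · rw [hk, hp.coeff_specializeTail]
  · rw [specializeTail, Polynomial.coeff_map, AlgHom.toRingHom_eq_coe, RingHom.coe_coe,
      aeval_zero, constantCoeff_eq, coeff_zero_coeff_finSuccEquiv,
      hp.coeff_eq_zero (by simpa using hk), map_zero]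

theorem aeval_cons_one_zero_of_isHomogeneous {n : ℕ} {p : MvPolynomial (Fin (m + 1)) R}
    (hp : p.IsHomogeneous n) :
    aeval (Fin.cons 1 0 : Fin (m + 1) → S) p = algebraMap R S (p.coeff (Finsupp.single 0 n)) := by
  rw [← eval_specializeTail, specializeTail_zero_of_isHomogeneous hp]
  simp

theorem aeval_derivFirst [Algebra ℝ S] (p : MvPolynomial (Fin (m + 1)) ℝ) (z : Fin m → S) :
    aeval z (derivFirst p) = aeval (Fin.cons 0 z) (pderiv 0 p) := by
  rw [derivFirst, ← AlgHom.comp_apply, comp_aeval]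
  congr 2
  ext i
  induction i using Fin.cases <;> simp

end MvPolynomial

theorem stmt8_general {m n : ℕ} (hn : 1 ≤ n) (p : MvPolynomial (Fin (m + 1)) ℝ)
    (hhom : p.IsHomogeneous n) (hstab : HSStable p) :
    HSStable (derivFirst p) := by
  intro z hz hsum
  have hline : ∀ w : ℂ, 0 ≤ w.re → (MvPolynomial.specializeTail z p).eval w ≠ 0 := by
    intro w hw
    rw [MvPolynomial.eval_specializeTail]
    refine hstab _ (fun i => ?_) ?_
    · induction i using Fin.cases <;> simp [hw, hz]
    · simpa [Fin.sum_univ_succ] using add_pos_of_nonneg_of_pos hw hsum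
  have hlead : algebraMap ℝ ℂ (p.coeff (Finsupp.single 0 n)) ≠ 0 := by
    rw [← MvPolynomial.aeval_cons_one_zero_of_isHomogeneous hhom]
    exact hstab _ (fun i => by induction i using Fin.cases <;> simp) (by simp [Fin.sum_univ_succ])
  have hdeg : 0 < (MvPolynomial.specializeTail z p).degree := by
    refine lt_of_lt_of_le (by exact_mod_cast hn) (Polynomial.le_degree_of_ne_zero ?_)
    rwa [hhom.coeff_specializeTail]
  rw [MvPolynomial.aeval_derivFirst, ← MvPolynomial.eval_specializeTail,
    ← MvPolynomial.derivative_specializeTail]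
  exact Polynomial.eval_derivative_ne_zero_of_re_nonneg hdeg hline le_rfl

theorem stmt8 {m n : ℕ} (hm : 1 ≤ m) (hn : 1 ≤ n) (p : MvPolynomial (Fin (m + 1)) ℝ)
    (hhom : p.IsHomogeneous n) (hcoeff : ∀ c, 0 ≤ p.coeff c) (hstab : HSStable p) :
    HSStable (derivFirst p) :=
  stmt8_general hn p hhom hstab
end

section
/- Let R be a multilinear homogeneous polynomial of degree N − M in N variables with nonnegative real coefficients that is H-stable, and define the polynomial q(λ_1,...,λ_N) = (Π_{1 ≤ i ≤ N} λ_i) · R(λ_1^{-1}, ..., λ_N^{-1}) (interpreted by clearing denominators, so that q is a multilinear homogeneous polynomial of degree M whose coefficient of Π_{j ∈ S} λ_j equals the coefficient of Π_{j ∉ S} λ_j in R). Then q is H-stable. -/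
open MvPolynomial Finset

/-- The exponent (multidegree) of the squarefree monomial `Π_{j ∈ S} λ_j`. -/
noncomputable def expS {N : ℕ} (S : Finset (Fin N)) : Fin N →₀ ℕ :=
  ∑ j ∈ S, Finsupp.single j 1

/-! If `Re zᵢ > 0` for all `i`, then also `Re zᵢ⁻¹ > 0`, and `q(z) = (∏ i, zᵢ) * R(z⁻¹)`
is a product of two nonzero factors. Multilinearity and homogeneity make `R` a combination of the
monomials `λ^T` with `#T = N - M`, which is what lets `q` be read as `λ^[N] R(λ⁻¹)`. -/

variable {N : ℕ}

lemma expS_apply (S : Finset (Fin N)) (j : Fin N) : expS S j = if j ∈ S then 1 else 0 := by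
  simp [expS, Finsupp.finsetSum_apply, Finsupp.single_apply]

lemma support_expS (S : Finset (Fin N)) : (expS S).support = S := by
  ext j
  simp [expS_apply]

lemma expS_injective : Function.Injective (expS (N := N)) := fun S T h => by
  rw [← support_expS S, ← support_expS T, h]

lemma expS_support_eq_self {c : Fin N →₀ ℕ} (hc : ∀ i, c i ≤ 1) : expS c.support = c := by
  ext j
  have := hc j
  simp only [expS_apply, Finsupp.mem_support_iff]
  split_ifs <;> omega

lemma card_support_eq_degree {c : Fin N →₀ ℕ} (hc : ∀ i, c i ≤ 1) : #c.support = c.degree := by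
  rw [Finsupp.degree_apply, card_eq_sum_ones]
  refine sum_congr rfl fun i hi => ?_
  have := hc i
  have := Finsupp.mem_support_iff.mp hi
  omega

lemma aeval_monomial_expS {A K : Type*} [CommSemiring A] [CommSemiring K] [Algebra A K]
    (z : Fin N → K) (S : Finset (Fin N)) (r : A) :
    aeval z (monomial (expS S) r) = algebraMap A K r * ∏ j ∈ S, z j := by
  rw [aeval_monomial, Finsupp.prod, support_expS]
  congr 1
  exact prod_congr rfl fun j hj => by rw [expS_apply, if_pos hj, pow_one]

lemma compl_mem_powersetCard_univ {k : ℕ} {S : Finset (Fin N)}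
    (hS : S ∈ powersetCard k univ) : Sᶜ ∈ powersetCard (N - k) univ := by
  rw [mem_powersetCard_univ] at hS ⊢
  rw [card_compl, Fintype.card_fin, hS]

lemma eq_sum_monomial_expS {A : Type*} [CommSemiring A] {d : ℕ} {p : MvPolynomial (Fin N) A}
    (hmul : ∀ c ∈ p.support, ∀ i, c i ≤ 1) (hhom : p.IsHomogeneous d) :
    p = ∑ T ∈ powersetCard d univ, monomial (expS T) (p.coeff (expS T)) := by
  have hsupp : p.support ⊆ (powersetCard d univ).image expS := by
    intro c hc
    have hdeg : c.degree = d := by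
      rw [Finsupp.degree_eq_weight_one]
      exact hhom (mem_support_iff.mp hc)
    refine mem_image.mpr ⟨c.support, ?_, expS_support_eq_self (hmul c hc)⟩
    rw [mem_powersetCard_univ, card_support_eq_degree (hmul c hc), hdeg]
  rw [← sum_image (f := fun c => monomial c (p.coeff c)) fun S _ T _ h => expS_injective h]
  conv_lhs => rw [as_sum p]
  exact sum_subset hsupp fun c _ hc => by rw [notMem_support_iff.mp hc, monomial_zero]

/-- The reversal `λ^[N] p(λ⁻¹)` of a multilinear polynomial, truncated to degree `M`
(which loses nothing when `p` is homogeneous of degree `N - M`). -/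
noncomputable def reverse {A : Type*} [CommSemiring A] (M : ℕ) (p : MvPolynomial (Fin N) A) :
    MvPolynomial (Fin N) A :=
  ∑ S ∈ powersetCard M univ, monomial (expS S) (p.coeff (expS Sᶜ))

lemma aeval_reverse {A K : Type*} [CommSemiring A] [Field K] [Algebra A K] {M : ℕ}
    (hMN : M ≤ N) {p : MvPolynomial (Fin N) A} (hmul : ∀ c ∈ p.support, ∀ i, c i ≤ 1)
    (hhom : p.IsHomogeneous (N - M)) {z : Fin N → K} (hz : ∀ i, z i ≠ 0) :
    aeval z (reverse M p) = (∏ i, z i) * aeval z⁻¹ p := by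
  conv_rhs => rw [eq_sum_monomial_expS hmul hhom]
  rw [reverse, map_sum, map_sum, mul_sum]
  refine sum_nbij' (fun S => Sᶜ) (fun T => Tᶜ) (fun S hS => compl_mem_powersetCard_univ hS)
    (fun T hT => by simpa [Nat.sub_sub_self hMN] using compl_mem_powersetCard_univ hT)
    (fun S _ => compl_compl S) (fun T _ => compl_compl T) fun S _ => ?_
  have hzS : ∏ j ∈ Sᶜ, z j ≠ 0 := prod_ne_zero_iff.mpr fun j _ => hz j
  rw [aeval_monomial_expS, aeval_monomial_expS, ← prod_mul_prod_compl S z]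
  simp only [Pi.inv_apply, prod_inv_distrib]
  field_simp

lemma Complex.re_inv_pos {z : ℂ} (hz : 0 < z.re) : 0 < z⁻¹.re := by
  rw [Complex.inv_re]
  exact div_pos hz (Complex.normSq_pos.mpr fun h => by simp [h] at hz)

theorem stmt12_general {M N : ℕ} (hMN : M ≤ N) (R : MvPolynomial (Fin N) ℝ)
    (hmul : ∀ c ∈ R.support, ∀ i, c i ≤ 1)
    (hhom : R.IsHomogeneous (N - M))
    (hstab : Hstable R) :
    Hstable (∑ S ∈ Finset.powersetCard M (Finset.univ : Finset (Fin N)),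
      MvPolynomial.monomial (expS S) (R.coeff (expS Sᶜ))) := by
  intro z hz
  have hz0 : ∀ i, z i ≠ 0 := fun i h => by simpa [h] using hz i
  rw [← reverse, aeval_reverse hMN hmul hhom hz0]
  exact mul_ne_zero (prod_ne_zero_iff.mpr fun i _ => hz0 i)
    (hstab _ fun i => Complex.re_inv_pos (hz i))

theorem stmt12 {M N : ℕ} (hMN : M ≤ N) (R : MvPolynomial (Fin N) ℝ)
    (hmul : ∀ c ∈ R.support, ∀ i, c i ≤ 1)
    (hhom : R.IsHomogeneous (N - M))
    (hcoeff : ∀ c, 0 ≤ R.coeff c)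
    (hstab : Hstable R) :
    Hstable (∑ S ∈ Finset.powersetCard M (Finset.univ : Finset (Fin N)),
      MvPolynomial.monomial (expS S) (R.coeff (expS Sᶜ))) :=
  stmt12_general hMN R hmul hhom hstab
end

section
/- Let p be a homogeneous polynomial of degree n in m variables with nonnegative real coefficients that is H-stable, let A be an m × m real matrix with strictly positive entries, and let ε > 0. Then the polynomial p_{I+εA} defined by p_{I+εA}(Z) = p((I + εA)·Z) for Z ∈ ℂ^m is a homogeneous polynomial of degree n with nonnegative real coefficients that is H-SStable. -/
/-- The polynomial `p_{I+εA}`, with `p_{I+εA}(Z) = p((I + εA)·Z)`: substitute for the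
`i`-th variable the linear form `Σ_j (I + εA)(i,j) X_j`. -/
noncomputable def compLin {m : ℕ} (p : MvPolynomial (Fin m) ℝ)
    (B : Matrix (Fin m) (Fin m) ℝ) : MvPolynomial (Fin m) ℝ :=
  MvPolynomial.aeval (fun i => ∑ j, MvPolynomial.C (B i j) * MvPolynomial.X j) p

namespace MvPolynomial

section NonnegCoeffs

variable {σ τ R : Type*} [CommSemiring R] [PartialOrder R] [IsOrderedRing R]

variable (σ R) in
def nonnegCoeffs : Subsemiring (MvPolynomial σ R) where
  carrier := {q | ∀ c, 0 ≤ q.coeff c}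
  zero_mem' _ := by simp
  one_mem' c := by
    classical
    rw [coeff_one]
    split_ifs <;> simp
  add_mem' hq hr c := by
    rw [coeff_add]
    exact add_nonneg (hq c) (hr c)
  mul_mem' {q r} hq hr c := by
    classical
    rw [coeff_mul]
    exact Finset.sum_nonneg fun x _ => mul_nonneg (hq _) (hr _)

theorem aeval_mem_nonnegCoeffs {p : MvPolynomial σ R} (hp : p ∈ nonnegCoeffs σ R)
    {g : σ → MvPolynomial τ R} (hg : ∀ i, g i ∈ nonnegCoeffs τ R) :
    aeval g p ∈ nonnegCoeffs τ R := by
  classical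
  rw [aeval_def, eval₂_eq]
  refine Subsemiring.sum_mem _ fun d _ => Subsemiring.mul_mem _ ?_ ?_
  · intro c
    rw [algebraMap_eq, coeff_C]
    split_ifs
    exacts [hp d, le_rfl]
  · exact Subsemiring.prod_mem _ fun i _ => Subsemiring.pow_mem _ (hg i) _

end NonnegCoeffs

variable {m : ℕ} {p : MvPolynomial (Fin m) ℝ} {B : Matrix (Fin m) (Fin m) ℝ}

theorem aeval_compLin (z : Fin m → ℂ) :
    aeval z (compLin p B) = aeval (fun i => ∑ j, (B i j : ℂ) * z j) p := by
  rw [compLin, comp_aeval_apply]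
  simp

theorem IsHomogeneous.compLin {n : ℕ} (hp : p.IsHomogeneous n) :
    (compLin p B).IsHomogeneous n := by
  simpa only [one_mul, _root_.compLin] using hp.aeval _ fun i =>
    IsHomogeneous.sum _ _ _ fun j _ => isHomogeneous_C_mul_X (B i j) j

theorem coeff_compLin_nonneg (hp : ∀ c, 0 ≤ p.coeff c) (hB : ∀ i j, 0 ≤ B i j) (c) :
    0 ≤ (compLin p B).coeff c := by
  refine aeval_mem_nonnegCoeffs hp (fun i => Subsemiring.sum_mem _ fun j _ => ?_) c
  exact Subsemiring.mul_mem _ (fun d => by rw [coeff_C]; split_ifs <;> simp [hB i j])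
    (fun d => by rw [coeff_X]; split_ifs <;> simp)

end MvPolynomial

open MvPolynomial

theorem Complex.re_sum_ofReal_mul_pos {ι : Type*} {s : Finset ι} {b : ι → ℝ} {z : ι → ℂ}
    (hb : ∀ j ∈ s, 0 < b j) (hz : ∀ j ∈ s, 0 ≤ (z j).re)
    (hsum : 0 < ∑ j ∈ s, (z j).re) :
    0 < (∑ j ∈ s, (b j : ℂ) * z j).re := by
  obtain ⟨j₀, hj₀, hzj₀⟩ :=
    Finset.exists_lt_of_sum_lt (f := fun _ => (0 : ℝ)) (by simpa using hsum)
  simp only [Complex.re_sum, Complex.re_ofReal_mul]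
  exact Finset.sum_pos' (fun j hj => mul_nonneg (hb j hj).le (hz j hj))
    ⟨j₀, hj₀, mul_pos (hb j₀ hj₀) hzj₀⟩

theorem Hstable.hSStable_compLin {m : ℕ} {p : MvPolynomial (Fin m) ℝ}
    {B : Matrix (Fin m) (Fin m) ℝ} (hp : Hstable p) (hB : ∀ i j, 0 < B i j) :
    HSStable (compLin p B) := by
  intro z hz hsum
  rw [aeval_compLin]
  exact hp _ fun i => Complex.re_sum_ofReal_mul_pos (fun j _ => hB i j) (fun j _ => hz j) hsum

theorem Matrix.one_add_smul_apply_pos {ι : Type*} [DecidableEq ι] {A : Matrix ι ι ℝ}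
    (hA : ∀ i j, 0 < A i j) {ε : ℝ} (hε : 0 < ε) (i j : ι) :
    0 < (1 + ε • A) i j := by
  rw [Matrix.add_apply, Matrix.smul_apply, smul_eq_mul, Matrix.one_apply]
  have := mul_pos hε (hA i j)
  split_ifs <;> linarith

theorem stmt13 {m n : ℕ} (p : MvPolynomial (Fin m) ℝ)
    (hhom : p.IsHomogeneous n) (hcoeff : ∀ c, 0 ≤ p.coeff c) (hstab : Hstable p)
    (A : Matrix (Fin m) (Fin m) ℝ) (hA : ∀ i j, 0 < A i j) (ε : ℝ) (hε : 0 < ε) :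
    (compLin p ((1 : Matrix (Fin m) (Fin m) ℝ) + ε • A)).IsHomogeneous n ∧
      (∀ c, 0 ≤ (compLin p ((1 : Matrix (Fin m) (Fin m) ℝ) + ε • A)).coeff c) ∧
      HSStable (compLin p ((1 : Matrix (Fin m) (Fin m) ℝ) + ε • A)) := by
  have hB := Matrix.one_add_smul_apply_pos hA hε
  exact ⟨hhom.compLin, coeff_compLin_nonneg hcoeff fun i j => (hB i j).le,
    hstab.hSStable_compLin hB⟩
end
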